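/- Let p ∈ (1,∞). Then lim_{y→1⁻} K(y)/(1−y) = 4p. -/
import Mathlib


open Set Real Filter MeasureTheory

/-- `F_a(y,w)` from the paper (with parameter `p`). -/
noncomputable def Fa (p a y w : ℝ) : ℝ :=
  (8*p*(1/a + 2*y) + (2*p/a + 4*(3*p - 2)*y + 2*(p - 1)*y*w)*w) / (y^2 * (4 + (p - 1)*w))

/-- `G` is the family `a ↦ G_a` of solutions of `G_a' = -F_a(y, G_a)` on `(0,1)`
with `G_a(1) = 0`: each `G_a` is continuous on `(0,1]`, positive on `(0,1)` and
strictly decreasing on `(0,1]`. -/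
def IsGFamily (p : ℝ) (G : ℝ → ℝ → ℝ) : Prop :=
  ∀ a : ℝ, 0 < a →
    ContinuousOn (G a) (Set.Ioc 0 1) ∧
    G a 1 = 0 ∧
    (∀ y ∈ Set.Ioo (0:ℝ) 1, HasDerivAt (G a) (-(Fa p a y (G a y))) y) ∧
    (∀ y ∈ Set.Ioo (0:ℝ) 1, 0 < G a y) ∧
    StrictAntiOn (G a) (Set.Ioc 0 1)

/-- Monotone comparison helper: nonpositive derivative on the interior gives `f 1 ≤ f y`. -/
lemma aux_antitone_cmp {f : ℝ → ℝ} {y : ℝ} (hy : y < 1)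
    (hc : ContinuousOn f (Icc y 1))
    (hd : ∀ t ∈ Ioo y 1, ∃ d, d ≤ 0 ∧ HasDerivAt f d t) : f 1 ≤ f y := by
  have hA : AntitoneOn f (Icc y 1) := by
    apply antitoneOn_of_deriv_nonpos (convex_Icc y 1) hc
    · rw [interior_Icc]
      intro t ht
      obtain ⟨d, _, h⟩ := hd t ht
      exact h.differentiableAt.differentiableWithinAt
    · rw [interior_Icc]
      intro t ht
      obtain ⟨d, hd0, h⟩ := hd t ht
      rw [h.deriv]; exact hd0
  exact hA (left_mem_Icc.2 hy.le) (right_mem_Icc.2 hy.le) hy.le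

/-- Monotone comparison helper: nonnegative derivative on the interior gives `f y ≤ f 1`. -/
lemma aux_monotone_cmp {f : ℝ → ℝ} {y : ℝ} (hy : y < 1)
    (hc : ContinuousOn f (Icc y 1))
    (hd : ∀ t ∈ Ioo y 1, ∃ d, 0 ≤ d ∧ HasDerivAt f d t) : f y ≤ f 1 := by
  have hA : MonotoneOn f (Icc y 1) := by
    apply monotoneOn_of_deriv_nonneg (convex_Icc y 1) hc
    · rw [interior_Icc]
      intro t ht
      obtain ⟨d, _, h⟩ := hd t ht
      exact h.differentiableAt.differentiableWithinAt
    · rw [interior_Icc]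
      intro t ht
      obtain ⟨d, hd0, h⟩ := hd t ht
      rw [h.deriv]; exact hd0
  exact hA (left_mem_Icc.2 hy.le) (right_mem_Icc.2 hy.le) hy.le

/-- Crude upper bound `F_a(t,w) ≤ 24p(1+w)²` for `a ≥ 1`, `t ∈ [1/2,1]`, `w ≥ 0`. -/
lemma Fa_upper (p : ℝ) (hp : 1 < p) {a t w : ℝ} (ha : 1 ≤ a) (ht1 : 1/2 ≤ t)
    (ht2 : t ≤ 1) (hw : 0 ≤ w) : Fa p a t w ≤ 24*p*(1+w)^2 := by
  have ha0 : (0:ℝ) < a := lt_of_lt_of_le one_pos ha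
  have hinv : 1/a ≤ 1 := by
    rw [div_le_one ha0]; exact ha
  have hinv0 : 0 < 1/a := by positivity
  have hp0 : (0:ℝ) < p := lt_trans one_pos hp
  have ht0 : (0:ℝ) < t := lt_of_lt_of_le (by norm_num) ht1
  have hD : (1:ℝ) ≤ t^2 * (4 + (p-1)*w) := by
    have hA : (1:ℝ)/4 ≤ t^2 := by nlinarith
    have hB : (4:ℝ) ≤ 4 + (p-1)*w := by nlinarith [mul_nonneg (sub_nonneg.2 hp.le) hw]
    have := mul_le_mul hA hB (by norm_num) (by positivity)
    linarith
  have h3p : (0:ℝ) < 3*p - 2 := by linarith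
  have hp1 : (0:ℝ) ≤ p - 1 := by linarith
  have hN : 0 ≤ 8*p*(1/a + 2*t) + (2*p/a + 4*(3*p - 2)*t + 2*(p - 1)*t*w)*w := by
    have e1 : (0:ℝ) ≤ 8*p*(1/a + 2*t) := by positivity
    have e2 : (0:ℝ) ≤ 2*p/a + 4*(3*p - 2)*t + 2*(p - 1)*t*w := by
      have : (0:ℝ) ≤ 4*(3*p-2)*t := by positivity
      have : (0:ℝ) ≤ 2*(p-1)*t*w := by positivity
      have : (0:ℝ) ≤ 2*p/a := by positivity
      linarith
    nlinarith [mul_nonneg e2 hw]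
  calc Fa p a t w ≤ 8*p*(1/a + 2*t) + (2*p/a + 4*(3*p - 2)*t + 2*(p - 1)*t*w)*w :=
        div_le_self hN hD
    _ ≤ 24*p*(1+w)^2 := by
        have h2pa : 2*p/a ≤ 2*p := by
          rw [div_le_iff₀ ha0]; nlinarith
        have t1 : 8*p*(1/a + 2*t) ≤ 24*p := by nlinarith
        have t2 : 2*p/a + 4*(3*p - 2)*t + 2*(p - 1)*t*w ≤ 2*p + 4*(3*p-2) + 2*(p-1)*w := by
          have : 4*(3*p-2)*t ≤ 4*(3*p-2) := by nlinarith
          have : 2*(p-1)*t*w ≤ 2*(p-1)*w := by nlinarith [mul_nonneg hp1 hw]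
          linarith
        have t3 : (2*p/a + 4*(3*p - 2)*t + 2*(p - 1)*t*w)*w ≤ (2*p + 4*(3*p-2) + 2*(p-1)*w)*w :=
          mul_le_mul_of_nonneg_right t2 hw
        nlinarith [mul_nonneg hp0.le hw, mul_nonneg hp0.le (sq_nonneg w), sq_nonneg w]

/-- Near `(y,w,b) = (1,0,0)` the expression defining `F` is within `ε` of `4p`. -/
lemma Phi_bound (p : ℝ) {ε : ℝ} (hε : 0 < ε) :
    ∃ δ > 0, ∀ y w b : ℝ, |y - 1| < δ → |w| < δ → |b| < δ →
      |(8*p*(b + 2*y) + (2*p*b + 4*(3*p - 2)*y + 2*(p - 1)*y*w)*w) / (y^2 * (4 + (p - 1)*w))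
        - 4*p| < ε := by
  set f : ℝ × ℝ × ℝ → ℝ := fun q =>
    (8*p*(q.2.2 + 2*q.1) + (2*p*q.2.2 + 4*(3*p - 2)*q.1 + 2*(p - 1)*q.1*q.2.1)*q.2.1) /
      (q.1^2 * (4 + (p - 1)*q.2.1)) with hf
  have hfc : ContinuousAt f ((1:ℝ), (0:ℝ), (0:ℝ)) := by
    apply ContinuousAt.div
    · fun_prop
    · fun_prop
    · norm_num [hf]
  have hval : f ((1:ℝ), (0:ℝ), (0:ℝ)) = 4*p := by
    simp only [hf]
    norm_num
    ring
  obtain ⟨δ, hδ, h⟩ := Metric.continuousAt_iff.1 hfc ε hε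
  refine ⟨δ, hδ, fun y w b h1 h2 h3 => ?_⟩
  have hd : dist ((y, w, b) : ℝ × ℝ × ℝ) ((1:ℝ), (0:ℝ), (0:ℝ)) < δ := by
    rw [Prod.dist_eq, Prod.dist_eq]
    simp only [Real.dist_eq, sub_zero]
    exact max_lt h1 (max_lt h2 h3)
  have := h hd
  rw [hval, Real.dist_eq] at this
  simpa [hf] using this

/-- `F_a` equals the expression of `Phi_bound` with `b = 1/a`. -/
lemma Fa_eq (p a y w : ℝ) :
    Fa p a y w = (8*p*(1/a + 2*y) + (2*p*(1/a) + 4*(3*p - 2)*y + 2*(p - 1)*y*w)*w) /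
      (y^2 * (4 + (p - 1)*w)) := by
  unfold Fa
  ring_nf

/-- A priori bound: for `a ≥ 1` and `y` close to `1`, `G a y ≤ 48 p (1-y)`. -/
lemma apriori_bound (p : ℝ) (hp : 1 < p) (G : ℝ → ℝ → ℝ) (hG : IsGFamily p G)
    {a y : ℝ} (ha : 1 ≤ a) (hy1 : 1 - 1/(48*p) ≤ y) (hy2 : y < 1) :
    G a y ≤ 48 * p * (1 - y) := by
  have hp0 : (0:ℝ) < p := lt_trans one_pos hp
  have ha0 : (0:ℝ) < a := lt_of_lt_of_le one_pos ha
  obtain ⟨hc, hG1, hd, hpos, hanti⟩ := hG a ha0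
  have hyhalf : (1:ℝ)/2 < y := by
    have : 1/(48*p) ≤ 1/48 := by
      apply one_div_le_one_div_of_le (by norm_num)
      nlinarith
    linarith
  have hy0 : (0:ℝ) < y := by linarith
  -- G is nonnegative on Icc y 1
  have hGnn : ∀ t ∈ Icc y 1, 0 ≤ G a t := by
    intro t ht
    rcases eq_or_lt_of_le ht.2 with h | h
    · rw [h, hG1]
    · exact le_of_lt (hpos t ⟨lt_of_lt_of_le hy0 ht.1, h⟩)
  have hIcc : Icc y 1 ⊆ Ioc (0:ℝ) 1 := fun t ht => ⟨lt_of_lt_of_le hy0 ht.1, ht.2⟩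
  -- comparison function ψ t = (1 + G a t)⁻¹ - 24 p t
  set ψ : ℝ → ℝ := fun t => (1 + G a t)⁻¹ - 24*p*t with hψdef
  have hψcont : ContinuousOn ψ (Icc y 1) := by
    apply ContinuousOn.sub
    · apply ContinuousOn.inv₀
      · exact continuousOn_const.add (hc.mono hIcc)
      · intro t ht
        have := hGnn t ht
        positivity
    · fun_prop
  have hψ1 : ψ 1 ≤ ψ y := by
    apply aux_antitone_cmp hy2 hψcont
    intro t ht
    have ht' : t ∈ Ioo (0:ℝ) 1 := ⟨lt_trans hy0 ht.1, ht.2⟩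
    have hGt := (hpos t ht').le
    have hne : (1 + G a t) ≠ 0 := by positivity
    have hd1 : HasDerivAt (fun s => 1 + G a s) (-(Fa p a t (G a t))) t :=
      (hd t ht').const_add 1
    have hd2 : HasDerivAt (fun s => (1 + G a s)⁻¹)
        (-(-(Fa p a t (G a t))) / (1 + G a t)^2) t := hd1.inv hne
    have hd3 : HasDerivAt ψ (-(-(Fa p a t (G a t))) / (1 + G a t)^2 - 24*p) t := by
      apply hd2.sub
      simpa using (hasDerivAt_id t).const_mul (24*p)
    refine ⟨_, ?_, hd3⟩
    have hF : Fa p a t (G a t) ≤ 24*p*(1 + G a t)^2 :=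
      Fa_upper p hp ha (by linarith [ht.1]) ht.2.le hGt
    have hsq : (0:ℝ) < (1 + G a t)^2 := by positivity
    rw [neg_neg, sub_nonpos, div_le_iff₀ hsq]
    nlinarith
  -- unfold ψ inequality
  have hψu : (1:ℝ) - 24*p ≤ (1 + G a y)⁻¹ - 24*p*y := by
    have : ψ 1 = (1 + G a 1)⁻¹ - 24*p*1 := rfl
    rw [hG1] at this
    norm_num at this
    calc (1:ℝ) - 24*p = ψ 1 := by rw [this]
      _ ≤ ψ y := hψ1
  set c : ℝ := 24*p*(1-y) with hcdef
  have hc2 : c ≤ 1/2 := by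
    have h48 : 1 - y ≤ 1/(48*p) := by linarith
    have : 24*p*(1-y) ≤ 24*p*(1/(48*p)) := by
      apply mul_le_mul_of_nonneg_left h48 (by positivity)
    calc c ≤ 24*p*(1/(48*p)) := this
      _ = 1/2 := by field_simp; ring
  have hc0 : 0 ≤ c := by
    have : 0 ≤ 1 - y := by linarith
    positivity
  have hinv : 1 - c ≤ (1 + G a y)⁻¹ := by
    simp only [hcdef]
    linarith [hψu]
  have hGy : 0 ≤ G a y := hGnn y ⟨le_refl y, hy2.le⟩
  have h1G : (0:ℝ) < 1 + G a y := by positivity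
  have hmul : (1 - c) * (1 + G a y) ≤ 1 := by
    have := mul_le_mul_of_nonneg_right hinv h1G.le
    rwa [inv_mul_cancel₀ (ne_of_gt h1G)] at this
  have : G a y ≤ 2*c := by nlinarith
  calc G a y ≤ 2*c := this
    _ = 48*p*(1-y) := by rw [hcdef]; ring

/-- Main two-sided estimate, uniform in large `a`. -/
lemma main_estimate (p : ℝ) (hp : 1 < p) (G : ℝ → ℝ → ℝ) (hG : IsGFamily p G)
    {ε : ℝ} (hε : 0 < ε) :
    ∃ η > 0, ∃ A : ℝ, ∀ y ∈ Ioo (1 - η) 1, ∀ a, A ≤ a →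
      (4*p - ε)*(1 - y) ≤ G a y ∧ G a y ≤ (4*p + ε)*(1 - y) := by
  have hp0 : (0:ℝ) < p := lt_trans one_pos hp
  obtain ⟨δ, hδ, hΦ⟩ := Phi_bound p hε
  refine ⟨min (1/(48*p)) (min δ (δ/(48*p))), by positivity, max 1 (2/δ), ?_⟩
  intro y hy a haA
  have hη1 : 1 - 1/(48*p) ≤ y := by
    have := hy.1
    have h := min_le_left (1/(48*p)) (min δ (δ/(48*p)))
    linarith
  have hηδ : 1 - δ ≤ y := by
    have := hy.1
    have h := le_trans (min_le_right (1/(48*p)) (min δ (δ/(48*p)))) (min_le_left δ (δ/(48*p)))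
    linarith
  have hη3 : 1 - y < δ/(48*p) := by
    have := hy.1
    have h := le_trans (min_le_right (1/(48*p)) (min δ (δ/(48*p)))) (min_le_right δ (δ/(48*p)))
    linarith
  have hy2 : y < 1 := hy.2
  have hyhalf : (1:ℝ)/2 < y := by
    have : 1/(48*p) ≤ 1/48 := by
      apply one_div_le_one_div_of_le (by norm_num)
      nlinarith
    linarith
  have hy0 : (0:ℝ) < y := by linarith
  have ha1 : (1:ℝ) ≤ a := le_trans (le_max_left _ _) haA
  have ha0 : (0:ℝ) < a := lt_of_lt_of_le one_pos ha1
  have hainv : 1/a < δ := by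
    have h2 : 2/δ ≤ a := le_trans (le_max_right _ _) haA
    have h2' : (0:ℝ) < 2/δ := by positivity
    have : 1/a ≤ 1/(2/δ) := one_div_le_one_div_of_le h2' h2
    rw [one_div_div] at this
    linarith
  have hainv' : |1/a| < δ := by
    rw [abs_of_pos (by positivity)]; exact hainv
  obtain ⟨hc, hG1, hd, hpos, hanti⟩ := hG a ha0
  have hIcc : Icc y 1 ⊆ Ioc (0:ℝ) 1 := fun t ht => ⟨lt_of_lt_of_le hy0 ht.1, ht.2⟩
  -- F bound at each interior point
  have hFbd : ∀ t ∈ Ioo y 1, |Fa p a t (G a t) - 4*p| < ε := by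
    intro t ht
    have ht' : t ∈ Ioo (0:ℝ) 1 := ⟨lt_trans hy0 ht.1, ht.2⟩
    have hGt0 : 0 < G a t := hpos t ht'
    have hGty : G a t < G a y := hanti ⟨hy0, hy2.le⟩ ⟨ht'.1, ht.2.le⟩ ht.1
    have hGyb : G a y ≤ 48*p*(1-y) := apriori_bound p hp G hG ha1 hη1 hy2
    have hGtδ : G a t < δ := by
      have : 48*p*(1-y) < 48*p*(δ/(48*p)) := by
        apply mul_lt_mul_of_pos_left hη3 (by positivity)
      have heq : 48*p*(δ/(48*p)) = δ := by field_simp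
      linarith
    have h1 : |t - 1| < δ := by
      rw [abs_of_nonpos (by linarith [ht.2])]
      have := ht.1
      linarith
    have h2 : |G a t| < δ := by rw [abs_of_pos hGt0]; exact hGtδ
    have := hΦ t (G a t) (1/a) h1 h2 hainv'
    rwa [← Fa_eq] at this
  constructor
  · -- lower bound: t ↦ G a t + (4p - ε) t is antitone
    have key : G a 1 + (4*p - ε)*1 ≤ G a y + (4*p - ε)*y := by
      apply aux_antitone_cmp (f := fun t => G a t + (4*p - ε)*t) hy2
      · exact (hc.mono hIcc).add (by fun_prop)
      · intro t ht
        have ht' : t ∈ Ioo (0:ℝ) 1 := ⟨lt_trans hy0 ht.1, ht.2⟩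
        refine ⟨-(Fa p a t (G a t)) + (4*p - ε), ?_, ?_⟩
        · have := (abs_lt.1 (hFbd t ht)).1
          linarith
        · exact (hd t ht').add (by simpa using (hasDerivAt_id t).const_mul (4*p - ε))
    rw [hG1] at key
    nlinarith
  · -- upper bound: t ↦ G a t + (4p + ε) t is monotone
    have key : G a y + (4*p + ε)*y ≤ G a 1 + (4*p + ε)*1 := by
      apply aux_monotone_cmp (f := fun t => G a t + (4*p + ε)*t) hy2
      · exact (hc.mono hIcc).add (by fun_prop)
      · intro t ht
        have ht' : t ∈ Ioo (0:ℝ) 1 := ⟨lt_trans hy0 ht.1, ht.2⟩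
        refine ⟨-(Fa p a t (G a t)) + (4*p + ε), ?_, ?_⟩
        · have := (abs_lt.1 (hFbd t ht)).2
          linarith
        · exact (hd t ht').add (by simpa using (hasDerivAt_id t).const_mul (4*p + ε))
    rw [hG1] at key
    nlinarith

theorem K_asymptotics_at_one (p : ℝ) (hp : 1 < p) (G : ℝ → ℝ → ℝ) (K : ℝ → ℝ)
    (hG : IsGFamily p G)
    (hK : ∀ y ∈ Set.Ioc (0:ℝ) 1,
      Filter.Tendsto (fun a => G a y) Filter.atTop (nhds (K y))) :
    Filter.Tendsto (fun y => K y / (1 - y)) (nhdsWithin 1 (Set.Iio 1)) (nhds (4*p)) := by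
  have hp0 : (0:ℝ) < p := lt_trans one_pos hp
  rw [Metric.tendsto_nhds]
  intro ε hε
  obtain ⟨η, hη, A, hmain⟩ := main_estimate p hp G hG (half_pos hε)
  have hmem : Ioo (1 - min η (1/2)) 1 ∈ nhdsWithin (1:ℝ) (Iio 1) := by
    apply Ioo_mem_nhdsLT_of_mem
    constructor
    · have : (0:ℝ) < min η (1/2) := lt_min hη (by norm_num)
      linarith
    · exact le_refl 1
  filter_upwards [hmem] with y hy
  have hy2 : y < 1 := hy.2
  have hy1 : 1 - η < y := by
    have h1 := hy.1
    have h2 := min_le_left η (1/2)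
    linarith
  have hy0 : (0:ℝ) < y := by
    have h1 := hy.1
    have h2 := min_le_right η (1/2)
    linarith
  have hKlow : (4*p - ε/2)*(1 - y) ≤ K y := by
    apply ge_of_tendsto (hK y ⟨hy0, hy2.le⟩)
    filter_upwards [eventually_ge_atTop A] with a ha
    exact (hmain y ⟨hy1, hy2⟩ a ha).1
  have hKhigh : K y ≤ (4*p + ε/2)*(1 - y) := by
    apply le_of_tendsto (hK y ⟨hy0, hy2.le⟩)
    filter_upwards [eventually_ge_atTop A] with a ha
    exact (hmain y ⟨hy1, hy2⟩ a ha).2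
  have hd : (0:ℝ) < 1 - y := by linarith
  have h1 : K y / (1 - y) ≤ 4*p + ε/2 := (div_le_iff₀ hd).2 (by linarith)
  have h2 : 4*p - ε/2 ≤ K y / (1 - y) := (le_div_iff₀ hd).2 (by linarith)
  rw [Real.dist_eq, abs_lt]
  constructor <;> linarith
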